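/- Let (X,·,+) be a trivial linear cycle set (i.e., x·y = y for all x,y) and A an abelian group viewed as a trivial module over (X,+). Then H²_N(X;A) is isomorphic to Bilin((X,+)×(X,+), A) × H²_sym((X,+);A), where Bilin denotes the group of Z-bilinear maps. -/

import Mathlib

/-- A (left) linear cycle set on an abelian group `X`. -/
structure LCS (X : Type*) [AddCommGroup X] where
  dot : X → X → X
  bij : ∀ x, Function.Bijective (dot x)
  cyc : ∀ x y z, dot (dot x y) (dot x z) = dot (dot y x) (dot y z)
  dot_add : ∀ x y z, dot x (y + z) = dot x y + dot x z
  add_dot : ∀ x y z, dot (x + y) z = dot (dot x y) (dot x z)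

/-- 2-cocycle conditions for a linear cycle set with coefficients in `A`. -/
def IsCocycle {X A : Type*} [AddCommGroup X] [AddCommGroup A] (L : LCS X)
    (f g : X → X → A) : Prop :=
  (∀ x y, g x y = g y x) ∧
  (∀ x y z, g x y + g (x + y) z = g y z + g x (y + z)) ∧
  (∀ x y z, f (x + y) z = f (L.dot x y) (L.dot x z) + f x z) ∧
  (∀ x y z, f x (y + z) - f x y - f x z = g (L.dot x y) (L.dot x z) - g y z)

/-- Normalised 2-cocycles, as an additive subgroup of pairs of maps. -/
def Zn {X : Type*} [AddCommGroup X] (L : LCS X) (A : Type*) [AddCommGroup A] :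
    AddSubgroup ((X → X → A) × (X → X → A)) where
  carrier := {p | IsCocycle L p.1 p.2 ∧ p.2 0 0 = 0}
  zero_mem' := by
    refine ⟨⟨?_, ?_, ?_, ?_⟩, ?_⟩ <;> intros <;> simp
  add_mem' := by
    rintro p q ⟨⟨hp1, hp2, hp3, hp4⟩, hp5⟩ ⟨⟨hq1, hq2, hq3, hq4⟩, hq5⟩
    refine ⟨⟨?_, ?_, ?_, ?_⟩, ?_⟩ <;> intros <;>
      simp only [Prod.fst_add, Prod.snd_add, Pi.add_apply]
    · rw [hp1, hq1]
    · rw [show ∀ a b c d : A, a + b + (c + d) = (a + c) + (b + d) by intros; abel,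
        hp2, hq2]; abel
    · rw [hp3, hq3]; abel
    · rw [show ∀ a b c d e h : A, a + b - (c + d) - (e + h) = (a - c - e) + (b - d - h)
        by intros; abel, hp4, hq4]; abel
    · rw [hp5, hq5]; simp
  neg_mem' := by
    rintro p ⟨⟨hp1, hp2, hp3, hp4⟩, hp5⟩
    refine ⟨⟨?_, ?_, ?_, ?_⟩, ?_⟩ <;> intros <;>
      simp only [Prod.fst_neg, Prod.snd_neg, Pi.neg_apply]
    · rw [hp1]
    · rw [show ∀ a b : A, -a + -b = -(a + b) by intros; abel, hp2]; abel
    · rw [hp3]; abel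
    · rw [show ∀ a b c : A, -a - -b - -c = -(a - b - c) by intros; abel, hp4]; abel
    · rw [hp5]; simp

/-- Normalised 2-coboundaries. -/
def Bn {X : Type*} [AddCommGroup X] (L : LCS X) (A : Type*) [AddCommGroup A] :
    AddSubgroup ((X → X → A) × (X → X → A)) where
  carrier := {p | ∃ l : X → A, l 0 = 0 ∧ (∀ x y, p.1 x y = l (L.dot x y) - l y) ∧
      (∀ x y, p.2 x y = l (x + y) - l x - l y)}
  zero_mem' := ⟨0, by simp⟩
  add_mem' := by
    rintro p q ⟨l, hl0, hl1, hl2⟩ ⟨m, hm0, hm1, hm2⟩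
    refine ⟨l + m, by simp [hl0, hm0], fun x y => ?_, fun x y => ?_⟩ <;>
      simp only [Prod.fst_add, Prod.snd_add, Pi.add_apply, hl1, hm1, hl2, hm2] <;> abel
  neg_mem' := by
    rintro p ⟨l, hl0, hl1, hl2⟩
    refine ⟨-l, by simp [hl0], fun x y => ?_, fun x y => ?_⟩ <;>
      simp only [Prod.fst_neg, Prod.snd_neg, Pi.neg_apply, hl1, hl2] <;> abel

/-- The second normalised linear cycle set cohomology group. -/
abbrev H2N {X : Type*} [AddCommGroup X] (L : LCS X) (A : Type*) [AddCommGroup A] :=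
  Zn L A ⧸ (Bn L A).addSubgroupOf (Zn L A)

/-- Symmetric group 2-cocycles of the abelian group `X` with trivial coefficients `A`. -/
def Zsym (X : Type*) [AddCommGroup X] (A : Type*) [AddCommGroup A] :
    AddSubgroup (X → X → A) where
  carrier := {g | (∀ x y, g x y = g y x) ∧
      ∀ x y z, g x y + g (x + y) z = g y z + g x (y + z)}
  zero_mem' := by refine ⟨?_, ?_⟩ <;> intros <;> simp
  add_mem' := by
    rintro p q ⟨hp1, hp2⟩ ⟨hq1, hq2⟩
    refine ⟨?_, ?_⟩ <;> intros <;> simp only [Pi.add_apply]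
    · rw [hp1, hq1]
    · rw [show ∀ a b c d : A, a + b + (c + d) = (a + c) + (b + d) by intros; abel,
        hp2, hq2]; abel
  neg_mem' := by
    rintro p ⟨hp1, hp2⟩
    refine ⟨?_, ?_⟩ <;> intros <;> simp only [Pi.neg_apply]
    · rw [hp1]
    · rw [show ∀ a b : A, -a + -b = -(a + b) by intros; abel, hp2]; abel

/-- Symmetric group 2-coboundaries. -/
def Bsym (X : Type*) [AddCommGroup X] (A : Type*) [AddCommGroup A] :
    AddSubgroup (X → X → A) where
  carrier := {g | ∃ l : X → A, ∀ x y, g x y = l (x + y) - l x - l y}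
  zero_mem' := ⟨0, by simp⟩
  add_mem' := by
    rintro p q ⟨l, hl⟩ ⟨m, hm⟩
    exact ⟨l + m, fun x y => by simp only [Pi.add_apply, hl, hm]; abel⟩
  neg_mem' := by
    rintro p ⟨l, hl⟩
    exact ⟨-l, fun x y => by simp only [Pi.neg_apply, hl]; abel⟩

/-- The second symmetric cohomology group of an abelian group. -/
abbrev H2sym (X : Type*) [AddCommGroup X] (A : Type*) [AddCommGroup A] :=
  Zsym X A ⧸ (Bsym X A).addSubgroupOf (Zsym X A)

/-- The group structure (composition) that Mathlib used to put on `AddAut A`. -/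
instance AddAut.group (A : Type*) [Add A] : Group (AddAut A) where
  mul g h := AddEquiv.trans h g
  one := AddEquiv.refl _
  inv := AddEquiv.symm
  mul_assoc _ _ _ := rfl
  one_mul _ := rfl
  mul_one _ := rfl
  inv_mul_cancel := AddEquiv.self_trans_symm

@[simp]
theorem AddAut.group_mul_apply {A : Type*} [Add A] (e₁ e₂ : AddAut A) (m : A) :
    (e₁ * e₂) m = e₁ (e₂ m) :=
  rfl

@[simp]
theorem AddAut.group_one_apply {A : Type*} [Add A] (m : A) : (1 : AddAut A) m = m :=
  rfl

@[simp]
theorem AddAut.group_inv_apply {A : Type*} [Add A] (e : AddAut A) (m : A) :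
    e⁻¹ m = e.symm m :=
  rfl

/-- Linear cycle set automorphisms, as a subgroup of the additive automorphisms. -/
def LCSAut {X : Type*} [AddCommGroup X] (L : LCS X) : Subgroup (AddAut X) where
  carrier := {φ | ∀ x y, φ (L.dot x y) = L.dot (φ x) (φ y)}
  one_mem' := by intro x y; rfl
  mul_mem' := by
    intro a b ha hb x y
    simp only [AddAut.group_mul_apply]
    rw [hb x y, ha]
  inv_mem' := by
    intro a ha x y
    apply a.injective
    rw [ha]
    simp

/-- The transported pair of maps under a pair of automorphisms. -/
def transport {X A : Type*} [AddCommGroup X] [AddCommGroup A]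
    (φ : AddAut X) (θ : AddAut A) (p : (X → X → A) × (X → X → A)) :
    (X → X → A) × (X → X → A) :=
  (fun x y => θ (p.1 (φ⁻¹ x) (φ⁻¹ y)), fun x y => θ (p.2 (φ⁻¹ x) (φ⁻¹ y)))

/-- Addition on the extension `X ⊕_{f,g} A`. -/
def addE {X A : Type*} [AddCommGroup X] [AddCommGroup A] (g : X → X → A)
    (p q : X × A) : X × A :=
  (p.1 + q.1, p.2 + q.2 + g p.1 q.1)

/-- Cycle set operation on the extension `X ⊕_{f,g} A`. -/
def dotE {X A : Type*} [AddCommGroup X] [AddCommGroup A] (L : LCS X) (f : X → X → A)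
    (p q : X × A) : X × A :=
  (L.dot p.1 q.1, q.2 + f p.1 q.1)

/-- Normalised 1-cocycles. -/
def Z1 {X : Type*} [AddCommGroup X] (L : LCS X) (A : Type*) [AddCommGroup A] :
    AddSubgroup (X → A) where
  carrier := {l | (∀ x y, l (x + y) = l x + l y) ∧ ∀ x y, l (L.dot x y) = l y}
  zero_mem' := by refine ⟨?_, ?_⟩ <;> intros <;> simp
  add_mem' := by
    rintro p q ⟨hp1, hp2⟩ ⟨hq1, hq2⟩
    refine ⟨?_, ?_⟩ <;> intros <;> simp only [Pi.add_apply, hp1, hq1, hp2, hq2] <;> abel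
  neg_mem' := by
    rintro p ⟨hp1, hp2⟩
    refine ⟨?_, ?_⟩ <;> intros <;> simp only [Pi.neg_apply, hp1, hp2] <;> abel

/-- The subgroup `Aut_A(E)` of the permutation group of `E = X ⊕_{f,g} A`. -/
def AutAE {X A : Type*} [AddCommGroup X] [AddCommGroup A] (L : LCS X)
    (f g : X → X → A) : Subgroup (Equiv.Perm (X × A)) where
  carrier := {ψ | (∀ p q, ψ (addE g p q) = addE g (ψ p) (ψ q)) ∧
      (∀ p q, ψ (dotE L f p q) = dotE L f (ψ p) (ψ q)) ∧
      ∃ φ ∈ LCSAut L, ∃ θ : AddAut A, ∃ l : X → A, ∀ x a, ψ (x, a) = (φ x, l x + θ a)}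
  one_mem' := by
    refine ⟨fun p q => rfl, fun p q => rfl, 1, one_mem _, 1, 0, fun x a => by simp⟩
  mul_mem' := by
    rintro a b ⟨ha1, ha2, φa, hφa, θa, la, ha3⟩ ⟨hb1, hb2, φb, hφb, θb, lb, hb3⟩
    refine ⟨fun p q => ?_, fun p q => ?_, φa * φb, mul_mem hφa hφb, θa * θb,
      fun x => la (φb x) + θa (lb x), fun x a => ?_⟩
    · simp only [Equiv.Perm.mul_apply, hb1, ha1]
    · simp only [Equiv.Perm.mul_apply, hb2, ha2]
    · simp only [Equiv.Perm.mul_apply, hb3, ha3, AddAut.group_mul_apply, map_add]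
      abel_nf
  inv_mem' := by
    rintro ψ ⟨h1, h2, φ, hφ, θ, l, h3⟩
    refine ⟨fun p q => ?_, fun p q => ?_, φ⁻¹, inv_mem hφ, θ⁻¹,
      fun x => -θ⁻¹ (l (φ⁻¹ x)), fun x a => ?_⟩
    · apply ψ.injective
      simp only [Equiv.Perm.coe_inv, Equiv.apply_symm_apply, h1]
    · apply ψ.injective
      simp only [Equiv.Perm.coe_inv, Equiv.apply_symm_apply, h2]
    · apply ψ.injective
      rw [Equiv.Perm.coe_inv, Equiv.apply_symm_apply, h3]
      simp

/-- A predicate packaging the linear cycle set axioms for a pair of binary operations. -/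
structure IsLCSOps {Y : Type*} (add : Y → Y → Y) (dot : Y → Y → Y) : Prop where
  add_assoc : ∀ a b c, add (add a b) c = add a (add b c)
  add_comm : ∀ a b, add a b = add b a
  zero_exists : ∃ e, (∀ a, add e a = a) ∧ ∀ a, ∃ b, add a b = e
  bij : ∀ a, Function.Bijective (dot a)
  cyc : ∀ a b c, dot (dot a b) (dot a c) = dot (dot b a) (dot b c)
  dot_add : ∀ a b c, dot a (add b c) = add (dot a b) (dot a c)
  add_dot : ∀ a b c, dot (add a b) c = dot (dot a b) (dot a c)

/-- The trivial linear cycle set on an abelian group. -/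
def trivLCS (X : Type*) [AddCommGroup X] : LCS X where
  dot := fun _ y => y
  bij := fun _ => Function.bijective_id
  cyc := fun _ _ _ => rfl
  dot_add := fun _ _ _ => rfl
  add_dot := fun _ _ _ => rfl

/-!
Over the trivial cycle set the cocycle conditions decouple: `g` is exactly a symmetric group
2-cocycle, and the two conditions on `f` say that `f` is additive in each argument, while
coboundaries have `f = 0` and `g = δλ`. Hence `(f, g) ↦ (f, [g])` maps onto `Bilin × H²_sym`
(normalising `g` only costs the constant coboundary `g 0 0`), and its kernel is exactly the
normalised coboundaries, because `g 0 0 = 0` forces `λ 0 = 0`.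
-/

def AddMonoidHom.mkBiadditive {X Y A : Type*} [AddZeroClass X] [AddZeroClass Y]
    [AddCommGroup A] (f : X → Y → A) (hleft : ∀ x x' y, f (x + x') y = f x y + f x' y)
    (hright : ∀ x y y', f x (y + y') = f x y + f x y') : X →+ Y →+ A :=
  AddMonoidHom.mk' (fun x => AddMonoidHom.mk' (f x) (hright x))
    fun x x' => AddMonoidHom.ext (hleft x x')

section TrivialCycleSet

variable {X A : Type*} [AddCommGroup X] [AddCommGroup A]

theorem isCocycle_trivLCS_iff {f g : X → X → A} :
    IsCocycle (trivLCS X) f g ↔ g ∈ Zsym X A ∧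
      (∀ x x' y, f (x + x') y = f x y + f x' y) ∧ ∀ x y y', f x (y + y') = f x y + f x y' := by
  simp only [IsCocycle, trivLCS, sub_self, sub_sub, sub_eq_zero]
  constructor
  · rintro ⟨hsymm, hassoc, hleft, hright⟩
    exact ⟨⟨hsymm, hassoc⟩, fun x x' y => (hleft x x' y).trans (add_comm _ _), hright⟩
  · rintro ⟨⟨hsymm, hassoc⟩, hleft, hright⟩
    exact ⟨hsymm, hassoc, fun x x' y => (hleft x x' y).trans (add_comm _ _), hright⟩

def Zn.bilin : Zn (trivLCS X) A →+ X →+ X →+ A :=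
  AddMonoidHom.mk'
    (fun p => AddMonoidHom.mkBiadditive p.1.1 (isCocycle_trivLCS_iff.1 p.2.1).2.1
      (isCocycle_trivLCS_iff.1 p.2.1).2.2)
    fun _ _ => by ext; rfl

theorem Zn.bilin_apply (p : Zn (trivLCS X) A) (x y : X) : Zn.bilin p x y = p.1.1 x y :=
  rfl

def Zn.toZsym : Zn (trivLCS X) A →+ Zsym X A :=
  AddMonoidHom.mk' (fun p => ⟨p.1.2, (isCocycle_trivLCS_iff.1 p.2.1).1⟩) fun _ _ => rfl

def Zn.toBilinProdH2sym : Zn (trivLCS X) A →+ (X →+ X →+ A) × H2sym X A :=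
  Zn.bilin.prod ((QuotientAddGroup.mk' _).comp Zn.toZsym)

theorem const_mem_Zsym (c : A) : (fun _ _ => c : X → X → A) ∈ Zsym X A :=
  ⟨fun _ _ => rfl, fun _ _ _ => rfl⟩

theorem const_mem_Bsym (c : A) : (fun _ _ => c : X → X → A) ∈ Bsym X A :=
  ⟨fun _ => -c, fun _ _ => by simp⟩

theorem Zn.toBilinProdH2sym_surjective :
    Function.Surjective (Zn.toBilinProdH2sym (X := X) (A := A)) := by
  rintro ⟨F, c⟩
  induction c using QuotientAddGroup.induction_on with
  | H g =>
    have hg : g.1 - (fun _ _ => g.1 0 0) ∈ Zsym X A := sub_mem g.2 (const_mem_Zsym _)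
    have hp : (fun x y => F x y, g.1 - fun _ _ => g.1 0 0) ∈ Zn (trivLCS X) A :=
      ⟨isCocycle_trivLCS_iff.2 ⟨hg, fun x x' y => by simp, fun x y y' => by simp⟩, sub_self _⟩
    refine ⟨⟨_, hp⟩, Prod.ext (by ext; rfl) ?_⟩
    refine QuotientAddGroup.eq_iff_sub_mem.2 ?_
    rw [AddSubgroup.mem_addSubgroupOf]
    show g.1 - _ - g.1 ∈ Bsym X A
    rw [sub_sub_cancel_left]
    exact neg_mem (const_mem_Bsym _)

theorem Zn.ker_toBilinProdH2sym :
    (Zn.toBilinProdH2sym (X := X) (A := A)).ker =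
      (Bn (trivLCS X) A).addSubgroupOf (Zn (trivLCS X) A) := by
  ext p
  rw [AddMonoidHom.mem_ker, AddSubgroup.mem_addSubgroupOf, Zn.toBilinProdH2sym,
    AddMonoidHom.prod_apply, Prod.mk_eq_zero, AddMonoidHom.comp_apply,
    QuotientAddGroup.mk'_apply, QuotientAddGroup.eq_zero_iff, AddSubgroup.mem_addSubgroupOf]
  constructor
  · rintro ⟨hf, l, hg⟩
    have hl0 : l 0 = 0 := by simpa using (hg 0 0).symm.trans p.2.2
    refine ⟨l, hl0, fun x y => ?_, hg⟩
    have hfxy := DFunLike.congr_fun (DFunLike.congr_fun hf x) y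
    rw [Zn.bilin_apply] at hfxy
    simp [trivLCS, hfxy]
  · rintro ⟨l, -, hf, hg⟩
    refine ⟨?_, l, hg⟩
    ext x y
    rw [Zn.bilin_apply, hf x y]
    simp [trivLCS]

end TrivialCycleSet

theorem trivial_lcs_cohomology (X A : Type*) [AddCommGroup X] [AddCommGroup A] :
    Nonempty (H2N (trivLCS X) A ≃+ (X →+ X →+ A) × H2sym X A) :=
  ⟨QuotientAddGroup.liftEquiv _ Zn.toBilinProdH2sym_surjective
    Zn.ker_toBilinProdH2sym.symm⟩
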